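/- arXiv:2203.00780 — 6 statements merged into one kernel-verified Lean document; each statement's English description precedes it below -/
import Mathlib

section
/- Suppose 𝒲 is nonempty. Then the intersection ⋂_{k≥0} 𝒮_k equals the set of all initial states x₀ ∈ ℝ^n such that for every disturbance sequence (w_t)_{t≥0} with w_t ∈ 𝒲 for all t, the closed-loop trajectory defined by x_0 = x₀ and x_{t+1} = A_cl x_t + w_t satisfies x_t ∈ 𝒳 and K x_t ∈ 𝒰 for all t ≥ 0. That is, ⋂_k 𝒮_k is exactly the set of initial states from which the closed-loop system robustly satisfies the state and input constraints for all time. -/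
open Matrix Set

/-- Closed-loop trajectory `x_{t+1} = A_cl x_t + w_t` starting from `x0`. -/
noncomputable def clTraj {n : ℕ} (Acl : Matrix (Fin n) (Fin n) ℝ) (x0 : Fin n → ℝ)
    (w : ℕ → Fin n → ℝ) : ℕ → Fin n → ℝ
  | 0 => x0
  | t + 1 => Acl.mulVec (clTraj Acl x0 w t) + w t

lemma clTraj_shift {n : ℕ} (Acl : Matrix (Fin n) (Fin n) ℝ) (x0 : Fin n → ℝ)
    (w0 : Fin n → ℝ) (w : ℕ → Fin n → ℝ) (t : ℕ) :
    clTraj Acl (Acl.mulVec x0 + w0) w t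
      = clTraj Acl x0 (fun s => Nat.casesOn s w0 w) (t + 1) := by
  induction t with
  | zero => simp [clTraj]
  | succ t ih => simp [clTraj, ih]

/-- if `𝒲` is nonempty, the intersection `⋂ₖ 𝒮ₖ` equals the set of
initial states from which the closed-loop system robustly satisfies the state and
input constraints for all time. -/
theorem intersection_eq_robust_admissible {n p : ℕ}
    (A : Matrix (Fin n) (Fin n) ℝ) (B : Matrix (Fin n) (Fin p) ℝ)
    (K : Matrix (Fin p) (Fin n) ℝ)
    (𝒳 : Set (Fin n → ℝ)) (𝒰 : Set (Fin p → ℝ)) (𝒲 : Set (Fin n → ℝ))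
    (h𝒲 : 𝒲.Nonempty)
    (Acl : Matrix (Fin n) (Fin n) ℝ) (hAcl : Acl = A + B * K)
    (S : ℕ → Set (Fin n → ℝ))
    (hS0 : S 0 = 𝒳)
    (hSk : ∀ k, S (k + 1) =
      S k ∩ {x : Fin n → ℝ | K.mulVec x ∈ 𝒰 ∧ ∀ w ∈ 𝒲, Acl.mulVec x + w ∈ S k}) :
    (⋂ k, S k) =
      {x0 : Fin n → ℝ | ∀ w : ℕ → Fin n → ℝ, (∀ t, w t ∈ 𝒲) →
        ∀ t, clTraj Acl x0 w t ∈ 𝒳 ∧ K.mulVec (clTraj Acl x0 w t) ∈ 𝒰} := by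
  -- Characterization of S k
  have key : ∀ k (x : Fin n → ℝ), x ∈ S k ↔
      ∀ w : ℕ → Fin n → ℝ, (∀ t, w t ∈ 𝒲) →
        (∀ t ≤ k, clTraj Acl x w t ∈ 𝒳) ∧
        (∀ t < k, K.mulVec (clTraj Acl x w t) ∈ 𝒰) := by
    intro k
    induction k with
    | zero =>
      intro x
      simp only [Nat.le_zero, Nat.not_lt_zero]
      constructor
      · intro hx w hw
        refine ⟨fun t ht => ?_, fun t h => h.elim⟩
        subst ht; rw [hS0] at hx; exact hx
      · intro h
        obtain ⟨w0, hw0⟩ := h𝒲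
        rw [hS0]
        exact ((h (fun _ => w0) (fun _ => hw0)).1 0 rfl)
    | succ k ih =>
      intro x
      rw [hSk k]
      constructor
      · rintro ⟨hxS, hKx, hnext⟩ w hw
        have base := (ih x).1 hxS w hw
        -- the tail trajectory: for t+1-indexed facts use shift with w's tail
        have tail : ∀ t ≤ k, clTraj Acl x w (t + 1) ∈ 𝒳 ∧
            (t < k → K.mulVec (clTraj Acl x w (t + 1)) ∈ 𝒰) := by
          intro t ht
          have hx1 : Acl.mulVec x + w 0 ∈ S k := hnext (w 0) (hw 0)
          have := (ih _).1 hx1 (fun s => w (s + 1)) (fun s => hw (s + 1))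
          have heq : ∀ s, clTraj Acl (Acl.mulVec x + w 0) (fun s => w (s + 1)) s
              = clTraj Acl x w (s + 1) := by
            intro s
            induction s with
            | zero => simp [clTraj]
            | succ s ihs => simp [clTraj, ihs]
          refine ⟨?_, fun hlt => ?_⟩
          · have := this.1 t ht; rwa [heq] at this
          · have := this.2 t hlt; rwa [heq] at this
        constructor
        · intro t ht
          rcases Nat.eq_or_lt_of_le ht with h | h
          · rcases t with _ | t
            · exact absurd h.symm (Nat.succ_ne_zero k)
            · exact (tail t (Nat.succ_le_succ_iff.mp (le_of_eq h))).1
          · exact base.1 t (Nat.lt_succ_iff.mp h)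
        · intro t ht
          rcases t with _ | t
          · exact hKx
          · exact (tail t (le_of_lt (Nat.lt_of_succ_lt_succ ht))).2
              (Nat.lt_of_succ_lt_succ ht)
      · intro h
        obtain ⟨w0, hw0⟩ := h𝒲
        refine ⟨(ih x).2 (fun w hw => ?_), ?_, ?_⟩
        · have := h w hw
          exact ⟨fun t ht => this.1 t (ht.trans (Nat.le_succ _)),
            fun t ht => this.2 t (ht.trans (Nat.lt_succ_self _))⟩
        · have := h (fun _ => w0) (fun _ => hw0)
          simpa [clTraj] using this.2 0 (Nat.succ_pos _)
        · intro ww hww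
          refine (ih _).2 (fun w hw => ?_)
          have := h (fun s => Nat.casesOn s ww w)
            (fun t => by cases t <;> simp [hww, hw])
          constructor
          · intro t ht
            have := this.1 (t + 1) (Nat.succ_le_succ ht)
            rwa [← clTraj_shift] at this
          · intro t ht
            have := this.2 (t + 1) (Nat.succ_lt_succ ht)
            rwa [← clTraj_shift] at this
  ext x
  simp only [mem_iInter, mem_setOf_eq]
  constructor
  · intro hx w hw t
    have h1 := (key (t + 1) x).1 (hx (t + 1)) w hw
    exact ⟨h1.1 t (Nat.le_succ _), h1.2 t (Nat.lt_succ_self _)⟩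
  · intro h k
    exact (key k x).2 fun w hw =>
      ⟨fun t _ => (h w hw t).1, fun t _ => (h w hw t).2⟩
end

section
/- The set 𝒮_∞ := ⋂_{k≥0} 𝒮_k is a robust positive invariant set for the closed-loop system: for every x ∈ 𝒮_∞ one has x ∈ 𝒳, K x ∈ 𝒰, and A_cl x + w ∈ 𝒮_∞ for all w ∈ 𝒲. -/
open Matrix Set

/-- `𝒮_∞ := ⋂ₖ 𝒮ₖ` is a robust positive invariant set for the
closed-loop system: every `x ∈ 𝒮_∞` satisfies `x ∈ 𝒳`, `K x ∈ 𝒰`, and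
`A_cl x + w ∈ 𝒮_∞` for all `w ∈ 𝒲`. -/
theorem intersection_robust_positive_invariant {n p : ℕ}
    (A : Matrix (Fin n) (Fin n) ℝ) (B : Matrix (Fin n) (Fin p) ℝ)
    (K : Matrix (Fin p) (Fin n) ℝ)
    (𝒳 : Set (Fin n → ℝ)) (𝒰 : Set (Fin p → ℝ)) (𝒲 : Set (Fin n → ℝ))
    (Acl : Matrix (Fin n) (Fin n) ℝ) (hAcl : Acl = A + B * K)
    (S : ℕ → Set (Fin n → ℝ))
    (hS0 : S 0 = 𝒳)
    (hSk : ∀ k, S (k + 1) =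
      S k ∩ {x : Fin n → ℝ | K.mulVec x ∈ 𝒰 ∧ ∀ w ∈ 𝒲, Acl.mulVec x + w ∈ S k}) :
    ∀ x ∈ ⋂ k, S k,
      x ∈ 𝒳 ∧ K.mulVec x ∈ 𝒰 ∧ ∀ w ∈ 𝒲, Acl.mulVec x + w ∈ ⋂ k, S k := by
  intro x hx
  simp only [mem_iInter] at hx
  have h1 := hx 1
  rw [hSk 0] at h1
  refine ⟨hS0 ▸ hx 0, h1.2.1, fun w hw => ?_⟩
  rw [mem_iInter]
  intro k
  have := hx (k + 1)
  rw [hSk k] at this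
  exact this.2.2 w hw
end

section
/- Suppose 𝒳 is closed and 𝒰 is compact. Then the set 𝒮_∞ := ⋂_{k≥0} 𝒮_k is robust control invariant: for every x ∈ 𝒮_∞ there exists u ∈ 𝒰 such that A x + B u + w ∈ 𝒮_∞ for all w ∈ 𝒲. -/
/-!
Each `𝒮ₖ` is closed: the robust predecessor of a closed set is the projection, along the compact
factor `𝒰`, of a closed subset of `ℝⁿ × 𝒰`. For `x ∈ 𝒮_∞` the admissible controls
`{u ∈ 𝒰 | ∀ w ∈ 𝒲, A x + B u + w ∈ 𝒮ₖ}` then form a decreasing sequence of nonempty closed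
subsets of the compact set `𝒰`, so by Cantor's intersection theorem some control is admissible
for every `k` at once.
-/

open Matrix Set

section RobustPredecessor

variable {X U W : Type*}

def robustPre (f : X → U → W → X) (𝒰 : Set U) (𝒲 : Set W) (T : Set X) : Set X :=
  {x | ∃ u ∈ 𝒰, ∀ w ∈ 𝒲, f x u w ∈ T}

def IsRobustControlInvariant (f : X → U → W → X) (𝒰 : Set U) (𝒲 : Set W) (T : Set X) : Prop :=
  T ⊆ robustPre f 𝒰 𝒲 T

variable {f : X → U → W → X} {𝒰 : Set U} {𝒲 : Set W}

theorem robustPre_mono : Monotone (robustPre f 𝒰 𝒲) :=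
  fun _ _ hST _ ⟨u, hu, hx⟩ => ⟨u, hu, fun w hw => hST (hx w hw)⟩

variable [TopologicalSpace X] [TopologicalSpace U]

theorem isClosed_setOf_forall_mem {Z : Type*} [TopologicalSpace Z] {g : Z → W → X}
    (hg : ∀ w, Continuous (g · w)) {T : Set X} (hT : IsClosed T) :
    IsClosed {z | ∀ w ∈ 𝒲, g z w ∈ T} := by
  simp only [ofPred_forall]
  exact isClosed_biInter fun w _ => hT.preimage (hg w)

theorem isClosed_robustPre (hf : ∀ w, Continuous fun q : X × U => f q.1 q.2 w)
    (h𝒰 : IsCompact 𝒰) {T : Set X} (hT : IsClosed T) : IsClosed (robustPre f 𝒰 𝒲 T) := by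
  have : CompactSpace 𝒰 := isCompact_iff_compactSpace.mp h𝒰
  have hC : IsClosed {q : X × 𝒰 | ∀ w ∈ 𝒲, f q.1 q.2 w ∈ T} :=
    isClosed_setOf_forall_mem
      (fun w => (hf w).comp (continuous_fst.prodMk (continuous_subtype_val.comp continuous_snd)))
      hT
  convert isClosedMap_fst_of_compactSpace (Y := 𝒰) _ hC using 1
  ext x
  simp [robustPre]

theorem robustPre_iInter_of_antitone (hf : ∀ x w, Continuous fun u => f x u w)
    (h𝒰 : IsCompact 𝒰) {S : ℕ → Set X} (hS : Antitone S) (hSc : ∀ k, IsClosed (S k)) :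
    robustPre f 𝒰 𝒲 (⋂ k, S k) = ⋂ k, robustPre f 𝒰 𝒲 (S k) := by
  refine (subset_iInter fun k => robustPre_mono (iInter_subset S k)).antisymm fun x hx => ?_
  have : CompactSpace 𝒰 := isCompact_iff_compactSpace.mp h𝒰
  set controls : ℕ → Set 𝒰 := fun k => {u | ∀ w ∈ 𝒲, f x u w ∈ S k}
  have hclosed (k : ℕ) : IsClosed (controls k) :=
    isClosed_setOf_forall_mem (fun w => (hf x w).comp continuous_subtype_val) (hSc k)
  have hnonempty (k : ℕ) : (controls k).Nonempty := by
    obtain ⟨u, hu, hxu⟩ := mem_iInter.mp hx k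
    exact ⟨⟨u, hu⟩, hxu⟩
  obtain ⟨u, hu⟩ := IsCompact.nonempty_iInter_of_sequence_nonempty_isCompact_isClosed controls
    (fun k _ hu w hw => hS k.le_succ (hu w hw)) hnonempty (hclosed 0).isCompact hclosed
  exact ⟨u, u.2, fun w hw => mem_iInter.mpr fun k => mem_iInter.mp hu k w hw⟩

theorem isRobustControlInvariant_iInter (hf : ∀ w, Continuous fun q : X × U => f q.1 q.2 w)
    (h𝒰 : IsCompact 𝒰) {S : ℕ → Set X} (hS0 : IsClosed (S 0))
    (hS : ∀ k, S (k + 1) = S k ∩ robustPre f 𝒰 𝒲 (S k)) :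
    IsRobustControlInvariant f 𝒰 𝒲 (⋂ k, S k) := by
  have hanti : Antitone S := antitone_nat_of_succ_le fun k => (hS k).symm ▸ inter_subset_left
  have hclosed (k : ℕ) : IsClosed (S k) := by
    induction k with
    | zero => exact hS0
    | succ k ih => rw [hS k]; exact ih.inter (isClosed_robustPre hf h𝒰 ih)
  have hf' (x : X) (w : W) : Continuous fun u => f x u w := (hf w).comp (Continuous.prodMk_right x)
  rw [IsRobustControlInvariant, robustPre_iInter_of_antitone hf' h𝒰 hanti hclosed]
  intro x hx
  refine mem_iInter.mpr fun k => ?_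
  have hx' : x ∈ S (k + 1) := mem_iInter.mp hx (k + 1)
  rw [hS k] at hx'
  exact hx'.2

end RobustPredecessor

/-- if `𝒳` is closed and `𝒰` is compact, then `𝒮_∞ := ⋂ₖ 𝒮ₖ` is
robust control invariant: for every `x ∈ 𝒮_∞` there exists `u ∈ 𝒰` such that
`A x + B u + w ∈ 𝒮_∞` for all `w ∈ 𝒲`. -/
theorem intersection_robust_control_invariant {n p : ℕ}
    (A : Matrix (Fin n) (Fin n) ℝ) (B : Matrix (Fin n) (Fin p) ℝ)
    (𝒳 : Set (Fin n → ℝ)) (𝒰 : Set (Fin p → ℝ)) (𝒲 : Set (Fin n → ℝ))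
    (h𝒳 : IsClosed 𝒳) (h𝒰 : IsCompact 𝒰)
    (S : ℕ → Set (Fin n → ℝ))
    (hS0 : S 0 = 𝒳)
    (hSk : ∀ k, S (k + 1) =
      S k ∩ {x : Fin n → ℝ | ∃ u ∈ 𝒰, ∀ w ∈ 𝒲, A.mulVec x + B.mulVec u + w ∈ S k}) :
    ∀ x ∈ ⋂ k, S k, ∃ u ∈ 𝒰, ∀ w ∈ 𝒲, A.mulVec x + B.mulVec u + w ∈ ⋂ k, S k := by
  have hf (w : Fin n → ℝ) :
      Continuous fun q : (Fin n → ℝ) × (Fin p → ℝ) => A *ᵥ q.1 + B *ᵥ q.2 + w := by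
    fun_prop
  exact isRobustControlInvariant_iInter (f := fun x u w => A *ᵥ x + B *ᵥ u + w) hf h𝒰
    (hS0 ▸ h𝒳) hSk
end

section
/- Closed-loop trajectories from an achievable system response: let (Φ_x, Φ_u) be an achievable system response for (A, B) over horizon T. For any w_0, …, w_T ∈ ℝ^n define x_t := Σ_{s=0}^{t} Φ_x(t,s) w_s for 0 ≤ t ≤ T and u_t := Σ_{s=0}^{t} Φ_u(t,s) w_s for 0 ≤ t ≤ T−1. Then x_0 = w_0 and x_{t+1} = A x_t + B u_t + w_{t+1} for all 0 ≤ t ≤ T−1; i.e., the signals x = Φ_x w and u = Φ_u w are trajectories of the system x(t+1) = A x(t) + B u(t) + w(t+1) driven by the disturbance w. -/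
open Matrix Set Finset

/-- closed-loop trajectories from an achievable system response —
if `(Φx, Φu)` satisfies `Φx(t,t) = I` and `Φx(t+1,s) = A Φx(t,s) + B Φu(t,s)`,
then `x_t := Σ_{s≤t} Φx(t,s) w_s`, `u_t := Σ_{s≤t} Φu(t,s) w_s` satisfy
`x_0 = w_0` and `x_{t+1} = A x_t + B u_t + w_{t+1}`. -/
theorem achievable_response_gives_trajectory {n p : ℕ} (T : ℕ) (hT : 1 ≤ T)
    (A : Matrix (Fin n) (Fin n) ℝ) (B : Matrix (Fin n) (Fin p) ℝ)
    (Φx : ℕ → ℕ → Matrix (Fin n) (Fin n) ℝ)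
    (Φu : ℕ → ℕ → Matrix (Fin p) (Fin n) ℝ)
    (hdiag : ∀ t, t ≤ T → Φx t t = 1)
    (hrec : ∀ t s, t < T → s ≤ t → Φx (t + 1) s = A * Φx t s + B * Φu t s)
    (w : ℕ → Fin n → ℝ)
    (x : ℕ → Fin n → ℝ) (u : ℕ → Fin p → ℝ)
    (hx : ∀ t, t ≤ T → x t = ∑ s ∈ Finset.range (t + 1), (Φx t s).mulVec (w s))
    (hu : ∀ t, t < T → u t = ∑ s ∈ Finset.range (t + 1), (Φu t s).mulVec (w s)) :
    x 0 = w 0 ∧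
    ∀ t, t < T → x (t + 1) = A.mulVec (x t) + B.mulVec (u t) + w (t + 1) := by
  constructor
  · rw [hx 0 (Nat.zero_le T), Finset.sum_range_one, hdiag 0 (Nat.zero_le T),
      Matrix.one_mulVec]
  · intro t ht
    rw [hx (t + 1) ht, hx t ht.le, hu t ht, Finset.sum_range_succ,
      hdiag (t + 1) ht, Matrix.one_mulVec]
    congr 1
    simp only [← Matrix.mulVecLin_apply, map_sum]
    rw [← Finset.sum_add_distrib]
    refine Finset.sum_congr rfl fun s hs => ?_
    rw [hrec t s ht (Nat.lt_succ_iff.mp (Finset.mem_range.mp hs))]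
    simp [Matrix.mulVecLin_apply, Matrix.add_mulVec, Matrix.mulVec_mulVec]
end

section
/- Every causal linear time-varying state-feedback controller is captured by an achievable system response: let K(t,s) ∈ ℝ^{p×n} for 0 ≤ s ≤ t ≤ T−1 define the controller u_t = Σ_{s=0}^{t} K(t,s) x_s. Then there exists an achievable system response (Φ_x, Φ_u) for (A, B) over horizon T such that for every w_0, …, w_T ∈ ℝ^n, the closed-loop trajectory defined by x_0 = w_0, u_t = Σ_{s=0}^{t} K(t,s) x_s, and x_{t+1} = A x_t + B u_t + w_{t+1} satisfies x_t = Σ_{s=0}^{t} Φ_x(t,s) w_s for all 0 ≤ t ≤ T and u_t = Σ_{s=0}^{t} Φ_u(t,s) w_s for all 0 ≤ t ≤ T−1. -/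
open Matrix Set Finset

noncomputable def PhixSLS {n p : ℕ} (A : Matrix (Fin n) (Fin n) ℝ)
    (B : Matrix (Fin n) (Fin p) ℝ) (K : ℕ → ℕ → Matrix (Fin p) (Fin n) ℝ) :
    ℕ → ℕ → Matrix (Fin n) (Fin n) ℝ
  | 0, _ => 1
  | (t + 1), s =>
      if s = t + 1 then 1
      else A * PhixSLS A B K t s +
        B * ∑ r ∈ (Finset.Icc s t).attach, K t r.1 * PhixSLS A B K r.1 s
  termination_by t => t
  decreasing_by
  · exact Nat.lt_succ_self t
  · have := Finset.mem_Icc.mp r.2; omega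

noncomputable def PhiuSLS {n p : ℕ} (A : Matrix (Fin n) (Fin n) ℝ)
    (B : Matrix (Fin n) (Fin p) ℝ) (K : ℕ → ℕ → Matrix (Fin p) (Fin n) ℝ)
    (t s : ℕ) : Matrix (Fin p) (Fin n) ℝ :=
  ∑ r ∈ Finset.Icc s t, K t r * PhixSLS A B K r s

lemma PhixSLS_diag {n p : ℕ} (A : Matrix (Fin n) (Fin n) ℝ)
    (B : Matrix (Fin n) (Fin p) ℝ) (K : ℕ → ℕ → Matrix (Fin p) (Fin n) ℝ)
    (t : ℕ) : PhixSLS A B K t t = 1 := by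
  cases t with
  | zero => rw [PhixSLS]
  | succ t => rw [PhixSLS]; simp

lemma PhixSLS_succ {n p : ℕ} (A : Matrix (Fin n) (Fin n) ℝ)
    (B : Matrix (Fin n) (Fin p) ℝ) (K : ℕ → ℕ → Matrix (Fin p) (Fin n) ℝ)
    {t s : ℕ} (hs : s ≤ t) :
    PhixSLS A B K (t + 1) s = A * PhixSLS A B K t s + B * PhiuSLS A B K t s := by
  rw [PhixSLS, if_neg (by omega)]
  congr 2
  rw [PhiuSLS]
  exact Finset.sum_attach (Finset.Icc s t) (fun r => K t r * PhixSLS A B K r s)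

lemma sum_swap_tri {M : Type*} [AddCommMonoid M] (t : ℕ) (f : ℕ → ℕ → M) :
    ∑ s ∈ Finset.range (t + 1), ∑ r ∈ Finset.range (s + 1), f s r
      = ∑ r ∈ Finset.range (t + 1), ∑ s ∈ Finset.Icc r t, f s r := by
  apply Finset.sum_comm'
  intro s r
  simp only [Finset.mem_range, Finset.mem_Icc]
  omega

lemma mulVec_sum' {m k : Type*} [Fintype k] {ι : Type*} (s : Finset ι)
    (A : Matrix m k ℝ) (f : ι → k → ℝ) :
    A.mulVec (∑ i ∈ s, f i) = ∑ i ∈ s, A.mulVec (f i) := by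
  induction s using Finset.cons_induction with
  | empty => simp [Matrix.mulVec_zero]
  | cons a s h ih => simp [Finset.sum_cons, Matrix.mulVec_add, ih]

lemma sum_mulVec' {m k : Type*} [Fintype k] {ι : Type*} (s : Finset ι)
    (f : ι → Matrix m k ℝ) (v : k → ℝ) :
    (∑ i ∈ s, f i).mulVec v = ∑ i ∈ s, (f i).mulVec v := by
  induction s using Finset.cons_induction with
  | empty => simp [Matrix.zero_mulVec]
  | cons a s h ih => simp [Finset.sum_cons, Matrix.add_mulVec, ih]

/-- every causal linear time-varying state-feedback controller
`u_t = Σ_{s≤t} K(t,s) x_s` is captured by an achievable system response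
`(Φx, Φu)`: the closed-loop trajectory driven by any disturbance `w` satisfies
`x_t = Σ_{s≤t} Φx(t,s) w_s` and `u_t = Σ_{s≤t} Φu(t,s) w_s`. -/
theorem state_feedback_has_achievable_response {n p : ℕ} (T : ℕ) (hT : 1 ≤ T)
    (A : Matrix (Fin n) (Fin n) ℝ) (B : Matrix (Fin n) (Fin p) ℝ)
    (K : ℕ → ℕ → Matrix (Fin p) (Fin n) ℝ) :
    ∃ (Φx : ℕ → ℕ → Matrix (Fin n) (Fin n) ℝ)
      (Φu : ℕ → ℕ → Matrix (Fin p) (Fin n) ℝ),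
      (∀ t, t ≤ T → Φx t t = 1) ∧
      (∀ t s, t < T → s ≤ t → Φx (t + 1) s = A * Φx t s + B * Φu t s) ∧
      ∀ (w : ℕ → Fin n → ℝ) (x : ℕ → Fin n → ℝ) (u : ℕ → Fin p → ℝ),
        x 0 = w 0 →
        (∀ t, u t = ∑ s ∈ Finset.range (t + 1), (K t s).mulVec (x s)) →
        (∀ t, x (t + 1) = A.mulVec (x t) + B.mulVec (u t) + w (t + 1)) →
        (∀ t, t ≤ T → x t = ∑ s ∈ Finset.range (t + 1), (Φx t s).mulVec (w s)) ∧
        (∀ t, t < T → u t = ∑ s ∈ Finset.range (t + 1), (Φu t s).mulVec (w s)) := by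
  refine ⟨PhixSLS A B K, PhiuSLS A B K, fun t _ => PhixSLS_diag A B K t,
    fun t s _ hs => PhixSLS_succ A B K hs, ?_⟩
  intro w x u hx0 hu hx
  -- key: x t is given by the response, for all t
  have hxresp : ∀ t, x t = ∑ s ∈ Finset.range (t + 1), (PhixSLS A B K t s).mulVec (w s) := by
    intro t
    induction t using Nat.strong_induction_on with
    | _ t ih =>
      match t with
      | 0 => simp [hx0, PhixSLS_diag]
      | (t + 1) =>
        have huresp : u t = ∑ s ∈ Finset.range (t + 1), (PhiuSLS A B K t s).mulVec (w s) := by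
          rw [hu t]
          have : ∀ s ∈ Finset.range (t + 1),
              (K t s).mulVec (x s)
                = ∑ r ∈ Finset.range (s + 1), (K t s * PhixSLS A B K s r).mulVec (w r) := by
            intro s hs
            rw [ih s (by simpa using Finset.mem_range.mp hs)]
            rw [mulVec_sum']
            exact Finset.sum_congr rfl fun r _ => by rw [Matrix.mulVec_mulVec]
          rw [Finset.sum_congr rfl this, sum_swap_tri]
          refine Finset.sum_congr rfl fun r _ => ?_
          rw [PhiuSLS, sum_mulVec' _ _ _]
        rw [hx t, huresp, ih t (Nat.lt_succ_self t)]
        rw [mulVec_sum' _ A _, mulVec_sum' _ B _]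
        
        rw [Finset.sum_range_succ (fun s => (PhixSLS A B K (t+1) s).mulVec (w s))]
        rw [PhixSLS_diag, Matrix.one_mulVec, ← Finset.sum_add_distrib]
        congr 1
        refine Finset.sum_congr rfl fun s hs => ?_
        rw [PhixSLS_succ A B K (Nat.lt_succ_iff.mp (Finset.mem_range.mp hs)),
          Matrix.add_mulVec, Matrix.mulVec_mulVec, Matrix.mulVec_mulVec]
  refine ⟨fun t _ => hxresp t, fun t _ => ?_⟩
  -- repeat the u computation
  rw [hu t]
  have : ∀ s ∈ Finset.range (t + 1),
      (K t s).mulVec (x s)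
        = ∑ r ∈ Finset.range (s + 1), (K t s * PhixSLS A B K s r).mulVec (w r) := by
    intro s hs
    rw [hxresp s, mulVec_sum']
    exact Finset.sum_congr rfl fun r _ => by rw [Matrix.mulVec_mulVec]
  rw [Finset.sum_congr rfl this, sum_swap_tri]
  refine Finset.sum_congr rfl fun r _ => ?_
  rw [PhiuSLS, sum_mulVec' _ _ _]
end

section
/- Discrete-time Lyapunov convergence: let C ⊆ ℝ^n be compact, let V : ℝ^n → ℝ satisfy V(x) ≥ 0 for all x ∈ C, and let ℓ : ℝ^n → ℝ be continuous with ℓ(0) = 0 and ℓ(x) > 0 for all x ≠ 0. If a sequence (x_t)_{t≥0} with x_t ∈ C for all t satisfies V(x_{t+1}) ≤ V(x_t) − ℓ(x_t) for all t ≥ 0, then x_t → 0 as t → ∞. -/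
open Set Filter

/-- discrete-time Lyapunov convergence — if `C` is compact,
`V ≥ 0` on `C`, `ℓ` is continuous with `ℓ(0) = 0` and `ℓ(x) > 0` for `x ≠ 0`,
and a sequence `(x_t) ⊆ C` satisfies `V(x_{t+1}) ≤ V(x_t) − ℓ(x_t)`, then
`x_t → 0`. -/
theorem discrete_lyapunov_convergence {n : ℕ}
    (C : Set (EuclideanSpace ℝ (Fin n))) (hC : IsCompact C)
    (V : EuclideanSpace ℝ (Fin n) → ℝ) (hV : ∀ x ∈ C, 0 ≤ V x)
    (ℓ : EuclideanSpace ℝ (Fin n) → ℝ) (hℓcont : Continuous ℓ)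
    (hℓ0 : ℓ 0 = 0) (hℓpos : ∀ x, x ≠ 0 → 0 < ℓ x)
    (x : ℕ → EuclideanSpace ℝ (Fin n)) (hx : ∀ t, x t ∈ C)
    (hdec : ∀ t, V (x (t + 1)) ≤ V (x t) - ℓ (x t)) :
    Tendsto x atTop (nhds 0) := by
  have hℓnn : ∀ y, 0 ≤ ℓ y := by
    intro y
    rcases eq_or_ne y 0 with rfl | hy
    · simp [hℓ0]
    · exact (hℓpos y hy).le
  -- V ∘ x is antitone
  have hanti : Antitone fun t => V (x t) := by
    apply antitone_nat_of_succ_le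
    intro t
    have := hdec t
    have := hℓnn (x t)
    linarith
  have hbdd : BddBelow (Set.range fun t => V (x t)) := by
    refine ⟨0, ?_⟩
    rintro v ⟨t, rfl⟩
    exact hV _ (hx t)
  obtain ⟨L, hL⟩ : ∃ L, Tendsto (fun t => V (x t)) atTop (nhds L) :=
    ⟨_, tendsto_atTop_ciInf hanti hbdd⟩
  have hℓto0 : Tendsto (fun t => ℓ (x t)) atTop (nhds 0) := by
    have h1 : Tendsto (fun t => V (x t) - V (x (t + 1))) atTop (nhds 0) := by
      have := hL.sub (hL.comp (tendsto_add_atTop_nat 1))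
      simpa using this
    refine squeeze_zero (fun t => hℓnn (x t)) (fun t => ?_) h1
    have := hdec t
    linarith
  -- conclude via compactness
  rw [tendsto_nhds]
  intro U hU h0U
  have hK : IsCompact (C \ U) := hC.diff hU
  rcases (C \ U).eq_empty_or_nonempty with hKe | hKne
  · refine Eventually.of_forall fun t => ?_
    by_contra hxt
    have : x t ∈ C \ U := ⟨hx t, hxt⟩
    rw [hKe] at this
    exact this
  obtain ⟨y, hyK, hmin⟩ := hK.exists_isMinOn hKne hℓcont.continuousOn
  have hy0 : y ≠ 0 := fun hyeq => hyK.2 (hyeq ▸ h0U)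
  have hm : 0 < ℓ y := hℓpos y hy0
  have hev : ∀ᶠ t in atTop, ℓ (x t) < ℓ y :=
    hℓto0.eventually (eventually_lt_nhds hm)
  refine hev.mono fun t ht => ?_
  by_contra hxt
  exact absurd (hmin ⟨hx t, hxt⟩) (not_le.mpr ht)
end
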